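/- For the lower level problem S(x) := argmin_y {y₁ | y₁² + y₂ ≤ 0, y₁² + (y₂−1)² ≤ 1 + x²}, one has S(x) = {(−√(√(2.25+x²) − 1.5), 1.5 − √(2.25+x²))} for all x ∈ ℝ, so the value function satisfies φ(x) = −√(√(2.25+x²) − 1.5) = −|x|/√(√(2.25+x²) + 1.5), and φ is directionally differentiable at x̄ = 0 with φ'(0; δ) = −|δ|/√3 for all δ ∈ ℝ. -/
import Mathlib


open Filter Topology

/-- The solution map of `min_y { y₁ : y₁² + y₂ ≤ 0, y₁² + (y₂-1)² ≤ 1 + x² }`. -/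
def lowerLevelSol (x : ℝ) : Set (ℝ × ℝ) :=
  {y : ℝ × ℝ | y.1 ^ 2 + y.2 ≤ 0 ∧ y.1 ^ 2 + (y.2 - 1) ^ 2 ≤ 1 + x ^ 2 ∧
    ∀ z : ℝ × ℝ, z.1 ^ 2 + z.2 ≤ 0 → z.1 ^ 2 + (z.2 - 1) ^ 2 ≤ 1 + x ^ 2 → y.1 ≤ z.1}

/-- The associated optimal value function. -/
noncomputable def lowerLevelVal (x : ℝ) : ℝ :=
  sInf {v : ℝ | ∃ y : ℝ × ℝ, y.1 ^ 2 + y.2 ≤ 0 ∧ y.1 ^ 2 + (y.2 - 1) ^ 2 ≤ 1 + x ^ 2 ∧ v = y.1}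

lemma aux_s_sq (x : ℝ) : Real.sqrt (2.25 + x ^ 2) ^ 2 = 2.25 + x ^ 2 :=
  Real.sq_sqrt (by positivity)

lemma aux_s_ge (x : ℝ) : (1.5 : ℝ) ≤ Real.sqrt (2.25 + x ^ 2) := by
  have h : (1.5 : ℝ) = Real.sqrt (1.5 ^ 2) := by
    rw [Real.sqrt_sq]; norm_num
  rw [h]
  exact Real.sqrt_le_sqrt (by nlinarith [sq_nonneg x])

lemma aux_a_sq (x : ℝ) :
    Real.sqrt (Real.sqrt (2.25 + x ^ 2) - 1.5) ^ 2 = Real.sqrt (2.25 + x ^ 2) - 1.5 :=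
  Real.sq_sqrt (by linarith [aux_s_ge x])

/-- Feasibility of the candidate point, with both constraints active. -/
lemma aux_feas (x : ℝ) :
    (-Real.sqrt (Real.sqrt (2.25 + x ^ 2) - 1.5)) ^ 2 + (1.5 - Real.sqrt (2.25 + x ^ 2)) = 0 ∧
    (-Real.sqrt (Real.sqrt (2.25 + x ^ 2) - 1.5)) ^ 2 +
      ((1.5 - Real.sqrt (2.25 + x ^ 2)) - 1) ^ 2 = 1 + x ^ 2 := by
  have h1 := aux_a_sq x
  have h2 := aux_s_sq x
  constructor <;> nlinarith [h1, h2]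

/-- Any feasible point has first coordinate squared at most `√(2.25+x²) - 1.5`. -/
lemma aux_bound (x : ℝ) (z : ℝ × ℝ) (h1 : z.1 ^ 2 + z.2 ≤ 0)
    (h2 : z.1 ^ 2 + (z.2 - 1) ^ 2 ≤ 1 + x ^ 2) :
    z.1 ^ 2 ≤ Real.sqrt (2.25 + x ^ 2) - 1.5 := by
  set s := Real.sqrt (2.25 + x ^ 2) with hs
  have hs2 : s ^ 2 = 2.25 + x ^ 2 := aux_s_sq x
  have hsge : (1.5 : ℝ) ≤ s := aux_s_ge x
  have h3 : (z.1 ^ 2 + 1) ^ 2 ≤ (z.2 - 1) ^ 2 := by nlinarith [sq_nonneg z.1]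
  have h4 : (z.1 ^ 2 + 1.5) ^ 2 ≤ s ^ 2 := by nlinarith
  have h5 : z.1 ^ 2 + 1.5 ≤ s := by nlinarith [sq_nonneg z.1, sq_nonneg (z.1 ^ 2 + 1.5 + s)]
  linarith

lemma aux_bound' (x : ℝ) (z : ℝ × ℝ) (h1 : z.1 ^ 2 + z.2 ≤ 0)
    (h2 : z.1 ^ 2 + (z.2 - 1) ^ 2 ≤ 1 + x ^ 2) :
    -Real.sqrt (Real.sqrt (2.25 + x ^ 2) - 1.5) ≤ z.1 := by
  have h := aux_bound x z h1 h2
  have habs : |z.1| ≤ Real.sqrt (Real.sqrt (2.25 + x ^ 2) - 1.5) := by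
    rw [← Real.sqrt_sq_eq_abs]
    exact Real.sqrt_le_sqrt h
  linarith [neg_abs_le z.1, abs_nonneg z.1]

/-- The value function formula. -/
lemma aux_val (x : ℝ) :
    lowerLevelVal x = -Real.sqrt (Real.sqrt (2.25 + x ^ 2) - 1.5) := by
  have hfeas := aux_feas x
  set a := Real.sqrt (Real.sqrt (2.25 + x ^ 2) - 1.5) with ha
  have hmem : -a ∈ {v : ℝ | ∃ y : ℝ × ℝ, y.1 ^ 2 + y.2 ≤ 0 ∧
      y.1 ^ 2 + (y.2 - 1) ^ 2 ≤ 1 + x ^ 2 ∧ v = y.1} :=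
    ⟨(-a, 1.5 - Real.sqrt (2.25 + x ^ 2)), le_of_eq hfeas.1, le_of_eq hfeas.2, rfl⟩
  have hlb : ∀ v ∈ {v : ℝ | ∃ y : ℝ × ℝ, y.1 ^ 2 + y.2 ≤ 0 ∧
      y.1 ^ 2 + (y.2 - 1) ^ 2 ≤ 1 + x ^ 2 ∧ v = y.1}, -a ≤ v := by
    rintro v ⟨y, hy1, hy2, rfl⟩
    exact aux_bound' x y hy1 hy2
  exact le_antisymm (csInf_le ⟨-a, hlb⟩ hmem) (le_csInf ⟨-a, hmem⟩ hlb)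

/-- The alternative value function formula. -/
lemma aux_val' (x : ℝ) :
    lowerLevelVal x = -|x| / Real.sqrt (Real.sqrt (2.25 + x ^ 2) + 1.5) := by
  rw [aux_val x]
  set s := Real.sqrt (2.25 + x ^ 2) with hs
  have hs2 : s ^ 2 = 2.25 + x ^ 2 := aux_s_sq x
  have hsge : (1.5 : ℝ) ≤ s := aux_s_ge x
  have hpos : 0 < Real.sqrt (s + 1.5) := Real.sqrt_pos.mpr (by linarith)
  have hmul : Real.sqrt (s - 1.5) * Real.sqrt (s + 1.5) = |x| := by
    rw [← Real.sqrt_mul (by linarith)]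
    have : (s - 1.5) * (s + 1.5) = x ^ 2 := by nlinarith
    rw [this, Real.sqrt_sq_eq_abs]
  field_simp
  linarith [hmul]

theorem solution_map_value_function_and_directional_derivative_example :
    (∀ x : ℝ, lowerLevelSol x =
      {(-Real.sqrt (Real.sqrt (2.25 + x ^ 2) - 1.5), 1.5 - Real.sqrt (2.25 + x ^ 2))}) ∧
    (∀ x : ℝ, lowerLevelVal x = -Real.sqrt (Real.sqrt (2.25 + x ^ 2) - 1.5)) ∧
    (∀ x : ℝ, lowerLevelVal x = -|x| / Real.sqrt (Real.sqrt (2.25 + x ^ 2) + 1.5)) ∧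
    (∀ δ : ℝ, Tendsto (fun t : ℝ => (lowerLevelVal (t * δ) - lowerLevelVal 0) / t)
      (𝓝[>] 0) (𝓝 (-|δ| / Real.sqrt 3))) := by
  refine ⟨?_, aux_val, aux_val', ?_⟩
  · intro x
    ext z
    simp only [lowerLevelSol, Set.mem_setOf_eq, Set.mem_singleton_iff]
    constructor
    · rintro ⟨h1, h2, hmin⟩
      have hfeas := aux_feas x
      set s := Real.sqrt (2.25 + x ^ 2) with hs
      set a := Real.sqrt (s - 1.5) with ha
      have hs2 : s ^ 2 = 2.25 + x ^ 2 := aux_s_sq x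
      have hsge : (1.5 : ℝ) ≤ s := aux_s_ge x
      have ha2 : a ^ 2 = s - 1.5 := aux_a_sq x
      have hle : z.1 ≤ -a := hmin (-a, 1.5 - s) (le_of_eq hfeas.1) (le_of_eq hfeas.2)
      have hge : -a ≤ z.1 := aux_bound' x z h1 h2
      have hz1 : z.1 = -a := le_antisymm hle hge
      have hz1sq : z.1 ^ 2 = s - 1.5 := by rw [hz1]; nlinarith
      have hz2le : z.2 ≤ 1.5 - s := by nlinarith
      have hz2ge : 1.5 - s ≤ z.2 := by nlinarith [sq_nonneg (z.2 - (1.5 - s))]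
      have hz2 : z.2 = 1.5 - s := le_antisymm hz2le hz2ge
      exact Prod.ext hz1 hz2
    · rintro rfl
      have hfeas := aux_feas x
      exact ⟨le_of_eq hfeas.1, le_of_eq hfeas.2, fun w hw1 hw2 => aux_bound' x w hw1 hw2⟩
  · intro δ
    have h30 : Real.sqrt (Real.sqrt (2.25 + (0 * δ) ^ 2) + 1.5) = Real.sqrt 3 := by
      rw [show (2.25 : ℝ) + (0 * δ) ^ 2 = 1.5 ^ 2 by ring, Real.sqrt_sq (by norm_num),
        show (1.5 : ℝ) + 1.5 = 3 by norm_num]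
    have hDpos : ∀ t : ℝ, 0 < Real.sqrt (Real.sqrt (2.25 + (t * δ) ^ 2) + 1.5) := by
      intro t
      apply Real.sqrt_pos.mpr
      have := Real.sqrt_nonneg (2.25 + (t * δ) ^ 2)
      linarith
    have hcont : Continuous fun t : ℝ => Real.sqrt (Real.sqrt (2.25 + (t * δ) ^ 2) + 1.5) := by
      fun_prop
    have htend : Tendsto (fun t : ℝ => -|δ| / Real.sqrt (Real.sqrt (2.25 + (t * δ) ^ 2) + 1.5))
        (𝓝 0) (𝓝 (-|δ| / Real.sqrt 3)) := by
      rw [← h30]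
      exact tendsto_const_nhds.div (hcont.tendsto 0) (ne_of_gt (hDpos 0))
    have h0 : lowerLevelVal 0 = 0 := by
      rw [aux_val' 0]
      simp
    apply Tendsto.congr' _ (htend.mono_left nhdsWithin_le_nhds)
    filter_upwards [self_mem_nhdsWithin] with t ht
    simp only [Set.mem_Ioi] at ht
    rw [h0, sub_zero, aux_val' (t * δ)]
    rw [abs_mul, abs_of_pos ht]
    field_simp
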